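/- arXiv:1403.3957 — 2 statements merged into one kernel-verified Lean document; each statement's English description precedes it below -/
import Mathlib

section
/- In the scalar–vector–tensor decomposition of a smooth symmetric 2-tensor f on ℝ³ not required to vanish at infinity, f can be simultaneously of scalar and tensor type if and only if f_{ij} = ∂_i∂_j E with ΔE = 0; in particular, the decomposition is not unique without decay conditions. -/
open Filter

noncomputable def pd (i : Fin 3) (f : EuclideanSpace ℝ (Fin 3) → ℝ)
    (x : EuclideanSpace ℝ (Fin 3)) : ℝ :=
  fderiv ℝ f x (EuclideanSpace.single i 1)

noncomputable def lap (f : EuclideanSpace ℝ (Fin 3) → ℝ)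
    (x : EuclideanSpace ℝ (Fin 3)) : ℝ :=
  ∑ i : Fin 3, pd i (fun y => pd i f y) x

/-- `f` is of scalar type: `f_{ij} = ∂_i∂_j E + δ_{ij} D` for smooth scalars `E, D`. -/
def IsScalarType (f : EuclideanSpace ℝ (Fin 3) → Fin 3 → Fin 3 → ℝ) : Prop :=
  ∃ E D : EuclideanSpace ℝ (Fin 3) → ℝ, ContDiff ℝ (⊤ : ℕ∞) E ∧ ContDiff ℝ (⊤ : ℕ∞) D ∧
    ∀ x i j, f x i j = pd i (fun y => pd j E y) x + (if i = j then D x else 0)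

/-- `f` is of tensor type: trace-free and divergence-free. -/
def IsTensorType (f : EuclideanSpace ℝ (Fin 3) → Fin 3 → Fin 3 → ℝ) : Prop :=
  (∀ x, ∑ i : Fin 3, f x i i = 0) ∧
  (∀ x j, ∑ i : Fin 3, pd i (fun y => f y i j) x = 0)

/- ### Auxiliary lemmas -/

local notation "E3" => EuclideanSpace ℝ (Fin 3)

lemma contDiff_pd {f : E3 → ℝ} (hf : ContDiff ℝ (⊤ : ℕ∞) f) (i : Fin 3) :
    ContDiff ℝ (⊤ : ℕ∞) (pd i f) := by
  have h1 : ContDiff ℝ (⊤ : ℕ∞) (fderiv ℝ f) := hf.fderiv_right (by simp)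
  exact (ContinuousLinearMap.apply ℝ ℝ (EuclideanSpace.single i 1)).contDiff.comp h1

lemma diffAt_pd {f : E3 → ℝ} (hf : ContDiff ℝ (⊤ : ℕ∞) f) (i : Fin 3) (x : E3) :
    DifferentiableAt ℝ (pd i f) x :=
  (contDiff_pd hf i).differentiable (by simp) x

lemma pd_comm {g : E3 → ℝ} (hg : ContDiff ℝ (⊤ : ℕ∞) g) (i j : Fin 3) (x : E3) :
    pd i (fun y => pd j g y) x = pd j (fun y => pd i g y) x := by
  have hd : ContDiff ℝ (⊤ : ℕ∞) (fderiv ℝ g) := hg.fderiv_right (by simp)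
  have key : ∀ k l, pd k (fun y => pd l g y) x
      = fderiv ℝ (fderiv ℝ g) x (EuclideanSpace.single k 1) (EuclideanSpace.single l 1) := by
    intro k l
    unfold pd
    rw [fderiv_clm_apply (hd.differentiable (by simp) x) (differentiableAt_const _)]
    simp
  rw [key, key]
  exact (hg.contDiffAt.isSymmSndFDerivAt (by rw [minSmoothness_of_isRCLikeNormedField]; exact WithTop.coe_le_coe.2 le_top)) _ _

variable {x : E3}

lemma pd_add {f g : E3 → ℝ} (hf : DifferentiableAt ℝ f x) (hg : DifferentiableAt ℝ g x)
    (i : Fin 3) : pd i (fun y => f y + g y) x = pd i f x + pd i g x := by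
  unfold pd; rw [fderiv_fun_add hf hg]; simp

lemma pd_sub {f g : E3 → ℝ} (hf : DifferentiableAt ℝ f x) (hg : DifferentiableAt ℝ g x)
    (i : Fin 3) : pd i (fun y => f y - g y) x = pd i f x - pd i g x := by
  unfold pd; rw [fderiv_fun_sub hf hg]; simp

lemma pd_const (c : ℝ) (i : Fin 3) (x : E3) : pd i (fun _ => c) x = 0 := by
  unfold pd; rw [fderiv_fun_const]; simp

lemma pd_const_mul {f : E3 → ℝ} (hf : DifferentiableAt ℝ f x) (c : ℝ) (i : Fin 3) :
    pd i (fun y => c * f y) x = c * pd i f x := by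
  unfold pd; rw [fderiv_const_mul hf]; simp

lemma pd_sum {ι : Type*} {s : Finset ι} {f : ι → E3 → ℝ}
    (hf : ∀ k ∈ s, DifferentiableAt ℝ (f k) x)
    (i : Fin 3) : pd i (fun y => ∑ k ∈ s, f k y) x = ∑ k ∈ s, pd i (f k) x := by
  unfold pd; rw [fderiv_fun_sum hf]; simp

lemma pd_mul {f g : E3 → ℝ} (hf : DifferentiableAt ℝ f x) (hg : DifferentiableAt ℝ g x)
    (i : Fin 3) : pd i (fun y => f y * g y) x = pd i f x * g x + f x * pd i g x := by
  unfold pd; rw [fderiv_fun_mul hf hg]; simp [mul_comm]; ring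

lemma pd_coord (a i : Fin 3) (x : E3) :
    pd i (fun y : E3 => y a) x = if a = i then 1 else 0 := by
  unfold pd
  rw [show (fun y : E3 => y a) = ⇑(EuclideanSpace.proj (𝕜 := ℝ) (ι := Fin 3) a) from rfl,
    ContinuousLinearMap.fderiv]
  simp [EuclideanSpace.single_apply, eq_comm]

lemma contDiff_coord (a : Fin 3) : ContDiff ℝ (⊤ : ℕ∞) (fun y : E3 => y a) :=
  (EuclideanSpace.proj (𝕜 := ℝ) (ι := Fin 3) a).contDiff

lemma clm_eq_zero (ℓ : E3 →L[ℝ] ℝ) (h : ∀ i, ℓ (EuclideanSpace.single i 1) = 0) : ℓ = 0 := by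
  apply ContinuousLinearMap.coe_injective
  apply Module.Basis.ext (EuclideanSpace.basisFun (Fin 3) ℝ).toBasis
  intro i
  simp [h i]

/-- Backward direction, as a standalone lemma. -/
lemma back (f : E3 → Fin 3 → Fin 3 → ℝ)
    (h : ∃ E : E3 → ℝ, ContDiff ℝ (⊤ : ℕ∞) E ∧ (∀ x, lap E x = 0) ∧
      ∀ x i j, f x i j = pd i (fun y => pd j E y) x) :
    IsScalarType f ∧ IsTensorType f := by
  obtain ⟨E, hE, hlap, hrep⟩ := h
  refine ⟨⟨E, fun _ => 0, hE, contDiff_const, fun x i j => by rw [hrep]; simp⟩, ?_, ?_⟩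
  · intro x
    simp only [hrep]
    exact hlap x
  · intro x j
    have h1 : ∀ i : Fin 3, (fun y => f y i j) = fun y => pd j (fun z => pd i E z) y :=
      fun i => funext fun y => (hrep y i j).trans (pd_comm hE i j y)
    calc ∑ i : Fin 3, pd i (fun y => f y i j) x
        = ∑ i : Fin 3, pd j (fun y => pd i (fun z => pd i E z) y) x := by
          refine Finset.sum_congr rfl fun i _ => ?_
          rw [h1 i]
          exact pd_comm (contDiff_pd hE i) i j x
      _ = pd j (fun y => ∑ i : Fin 3, pd i (fun z => pd i E z) y) x := by
          exact (pd_sum (fun k _ => diffAt_pd (contDiff_pd hE k) k x) j).symm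
      _ = 0 := by
          have : (fun y => ∑ i : Fin 3, pd i (fun z => pd i E z) y) = fun _ => (0 : ℝ) :=
            funext fun y => hlap y
          rw [this, pd_const]

/-- Second derivatives of a product of two coordinates. -/
lemma hess_coord_mul (a b i j : Fin 3) (x : E3) :
    pd i (fun y => pd j (fun z : E3 => z a * z b) y) x =
      (if a = j then 1 else 0) * (if b = i then 1 else 0)
      + (if a = i then 1 else 0) * (if b = j then 1 else 0) := by
  have hda : ∀ y : E3, DifferentiableAt ℝ (fun z : E3 => z a) y :=
    fun y => (contDiff_coord a).differentiable (by simp) y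
  have hdb : ∀ y : E3, DifferentiableAt ℝ (fun z : E3 => z b) y :=
    fun y => (contDiff_coord b).differentiable (by simp) y
  have h1 : (fun y => pd j (fun z : E3 => z a * z b) y)
      = fun y => (if a = j then 1 else 0) * y b + y a * (if b = j then 1 else 0) := by
    funext y
    rw [pd_mul (hda y) (hdb y), pd_coord, pd_coord]
  rw [h1, pd_add ((hdb x).const_mul _) ((hda x).mul_const _) i,
    pd_const_mul (hdb x), pd_coord]
  have h2 : pd i (fun y : E3 => y a * (if b = j then 1 else 0)) x
      = (if a = i then 1 else 0) * (if b = j then 1 else 0) := by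
    rw [show (fun y : E3 => y a * (if b = j then 1 else 0))
        = fun y : E3 => (if b = j then 1 else 0) * y a from funext fun y => mul_comm _ _,
      pd_const_mul (hda x), pd_coord]
    ring
  rw [h2]

/-- Without decay conditions, a smooth symmetric 2-tensor `f` on ℝ³ is simultaneously
of scalar and tensor type if and only if `f_{ij} = ∂_i∂_j E` with `ΔE = 0`; in
particular there exist nonzero such `f`, so the SVT decomposition is not unique
without decay conditions. -/
theorem svt_scalar_tensor_overlap
    (f : EuclideanSpace ℝ (Fin 3) → Fin 3 → Fin 3 → ℝ)
    (hsmooth : ContDiff ℝ (⊤ : ℕ∞) f)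
    (hsym : ∀ x i j, f x i j = f x j i) :
    ((IsScalarType f ∧ IsTensorType f) ↔
      ∃ E : EuclideanSpace ℝ (Fin 3) → ℝ, ContDiff ℝ (⊤ : ℕ∞) E ∧ (∀ x, lap E x = 0) ∧
        ∀ x i j, f x i j = pd i (fun y => pd j E y) x) ∧
    ∃ f₀ : EuclideanSpace ℝ (Fin 3) → Fin 3 → Fin 3 → ℝ,
      f₀ ≠ 0 ∧ ContDiff ℝ (⊤ : ℕ∞) f₀ ∧ (∀ x i j, f₀ x i j = f₀ x j i) ∧
      IsScalarType f₀ ∧ IsTensorType f₀ := by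
  constructor
  · constructor
    · -- forward direction
      rintro ⟨⟨E, D, hE, hD, hrep⟩, htr, hdiv⟩
      -- trace condition gives D = -(lap E)/3
      have hDval : ∀ x, D x = -(1/3) * lap E x := by
        intro x
        have h := htr x
        simp only [hrep] at h
        simp only [if_true, eq_self_iff_true, Finset.sum_add_distrib, Finset.sum_const,
          Finset.card_univ, Fintype.card_fin, smul_eq_mul, nsmul_eq_mul, Nat.cast_ofNat] at h
        have : lap E x = ∑ i : Fin 3, pd i (fun y => pd i E y) x := rfl
        rw [this]
        linarith
      have hlapE : ContDiff ℝ (⊤ : ℕ∞) (lap E) := by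
        have : lap E = fun x => ∑ i : Fin 3, pd i (fun y => pd i E y) x := rfl
        rw [this]
        exact ContDiff.sum fun i _ => contDiff_pd (contDiff_pd hE i) i
      -- divergence condition gives ∂_j (lap E) = 0
      have hker : ∀ j x, pd j (lap E) x = 0 := by
        intro j x
        have h := hdiv x j
        have h1 : ∀ i : Fin 3, (fun y => f y i j)
            = fun y => pd i (fun z => pd j E z) y + (if i = j then D y else 0) :=
          fun i => funext fun y => hrep y i j
        have h2 : ∀ i : Fin 3, pd i (fun y => f y i j) x
            = pd j (fun y => pd i (fun z => pd i E z) y) x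
              + (if i = j then pd j D x else 0) := by
          intro i
          rw [h1 i]
          by_cases hij : i = j
          · subst hij
            have e : (fun y => pd i (fun z => pd i E z) y + if i = i then D y else 0)
                = fun y => pd i (fun z => pd i E z) y + D y := by funext y; simp
            rw [e, pd_add (diffAt_pd (contDiff_pd hE i) i x) (hD.differentiable (by simp) x)]
            simp
          · simp only [if_neg hij]
            have e : (fun y => pd i (fun z => pd j E z) y + (0 : ℝ))
                = fun y => pd j (fun z => pd i E z) y := by
              funext y; rw [add_zero]; exact pd_comm hE i j y
            rw [e, pd_comm (contDiff_pd hE i) i j x, add_zero]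
        rw [Finset.sum_congr rfl fun i _ => h2 i, Finset.sum_add_distrib,
          Finset.sum_ite_eq' Finset.univ j (fun _ => pd j D x)] at h
        simp only [Finset.mem_univ, if_pos] at h
        have hsum : ∑ i : Fin 3, pd j (fun y => pd i (fun z => pd i E z) y) x
            = pd j (lap E) x := by
          rw [← pd_sum (fun k _ => diffAt_pd (contDiff_pd hE k) k x) j]
          rfl
        rw [hsum] at h
        have hpdD : pd j D x = -(1/3) * pd j (lap E) x := by
          have : D = fun y => -(1/3) * lap E y := funext hDval
          rw [this, pd_const_mul (hlapE.differentiable (by simp) x)]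
        rw [hpdD] at h
        linarith
      -- lap E is constant
      have hconst : ∀ x, lap E x = lap E 0 := by
        intro x
        refine is_const_of_fderiv_eq_zero (hlapE.differentiable (by simp)) (fun y => ?_) x 0
        exact clm_eq_zero _ fun i => hker i y
      set c : ℝ := lap E 0 with hc
      -- the corrected potential
      set q : E3 → ℝ := fun y => ∑ i : Fin 3, y i * y i with hq
      have hqsmooth : ContDiff ℝ (⊤ : ℕ∞) q :=
        ContDiff.sum fun i _ => (contDiff_coord i).mul (contDiff_coord i)
      set E' : E3 → ℝ := fun y => E y - c/6 * q y with hE'def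
      have hE' : ContDiff ℝ (⊤ : ℕ∞) E' := hE.sub (contDiff_const.mul hqsmooth)
      have hhessq : ∀ i j x, pd i (fun y => pd j q y) x = if i = j then 2 else 0 := by
        intro i j x
        have : (fun y => pd j q y) = fun y => ∑ k : Fin 3,
            pd j (fun z : E3 => z k * z k) y := by
          funext y
          exact pd_sum (fun k _ => ((contDiff_coord k).mul (contDiff_coord k)).differentiable
            (by simp) y) j
        rw [this, pd_sum (fun k _ => by
          have := contDiff_pd ((contDiff_coord k).mul (contDiff_coord k)) j
          exact this.differentiable (by simp) x) i]
        rw [Finset.sum_congr rfl fun k _ => hess_coord_mul k k i j x]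
        fin_cases i <;> fin_cases j <;> simp [Fin.sum_univ_three] <;> norm_num
      have hhessE' : ∀ i j x, pd i (fun y => pd j E' y) x
          = pd i (fun y => pd j E y) x - c/6 * (if i = j then 2 else 0) := by
        intro i j x
        have hqd : ∀ y, DifferentiableAt ℝ (fun z => c/6 * q z) y :=
          fun y => (contDiff_const.mul hqsmooth).differentiable (by simp) y
        have h1 : (fun y => pd j E' y)
            = fun y => pd j E y - c/6 * pd j q y := by
          funext y
          rw [hE'def]
          rw [pd_sub (hE.differentiable (by simp) y) (hqd y) j,
            pd_const_mul (hqsmooth.differentiable (by simp) y)]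
        rw [h1, pd_sub (diffAt_pd hE j x)
          (((contDiff_const.mul (contDiff_pd hqsmooth j))).differentiable (by simp) x) i,
          pd_const_mul (diffAt_pd hqsmooth j x), hhessq]
      refine ⟨E', hE', ?_, ?_⟩
      · intro x
        have : lap E' x = ∑ i : Fin 3, pd i (fun y => pd i E' y) x := rfl
        rw [this, Finset.sum_congr rfl fun i _ => hhessE' i i x]
        have : lap E x = ∑ i : Fin 3, pd i (fun y => pd i E y) x := rfl
        have hx := hconst x
        rw [this] at hx
        simp only [if_pos rfl]
        rw [Finset.sum_sub_distrib, hx]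
        simp [Fin.sum_univ_three]
        ring
      · intro x i j
        rw [hrep x i j, hhessE' i j x, hDval x, hconst x]
        by_cases hij : i = j <;> simp [hij] <;> ring
    · exact back f
  · -- existence of a nonzero example
    set E₀ : E3 → ℝ := fun y => y 0 * y 1 with hE₀def
    have hE₀ : ContDiff ℝ (⊤ : ℕ∞) E₀ := (contDiff_coord 0).mul (contDiff_coord 1)
    set f₀ : E3 → Fin 3 → Fin 3 → ℝ := fun x i j => pd i (fun y => pd j E₀ y) x with hf₀def
    have hhess : ∀ i j x, f₀ x i j
        = (if (0 : Fin 3) = j then 1 else 0) * (if (1 : Fin 3) = i then 1 else 0)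
          + (if (0 : Fin 3) = i then 1 else 0) * (if (1 : Fin 3) = j then 1 else 0) :=
      fun i j x => hess_coord_mul 0 1 i j x
    have hlap₀ : ∀ x, lap E₀ x = 0 := by
      intro x
      have : lap E₀ x = ∑ i : Fin 3, f₀ x i i := rfl
      rw [this, Finset.sum_congr rfl fun i _ => hhess i i x]
      simp [Fin.sum_univ_three]
    refine ⟨f₀, ?_, ?_, ?_, back f₀ ⟨E₀, hE₀, hlap₀, fun _ _ _ => rfl⟩⟩
    · intro h
      have h1 : f₀ 0 0 1 = 0 := by rw [h]; rfl
      rw [hhess 0 1 0] at h1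
      norm_num at h1
    · exact contDiff_pi.2 fun i => contDiff_pi.2 fun j =>
        contDiff_pd (contDiff_pd hE₀ j) i
    · exact fun x i j => pd_comm hE₀ i j x
end

section
/- Define the Einstein-frame variables ḡ = α g, dφ̄/dφ = √β/α, V̄(φ̄) = V(φ)/α², with α = 1−ξφ², β = 1+(6ξ−1)ξφ², both nowhere vanishing. Then φ̄ can be integrated explicitly as φ̄ = (−√κ · asinh(√κ φ) + √(ξ+κ) · atanh(φ√(ξ+κ)/√β))/ξ where κ = (6ξ−1)ξ, i.e. the derivative of this expression with respect to φ equals √β/α. -/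
/-!
With `α = 1 − ξφ²` and `β = 1 + κφ²`, the two terms differentiate to `−κ/√β` and
`(ξ + κ)/(√β α)`, the latter because `1 − (φ√(ξ+κ)/√β)² = α/β`. Their sum is
`(ξ + κα)/(√β α) = ξβ/(√β α) = ξ√β/α`.
-/

/-- The inverse hyperbolic tangent, `artanh x = ½ log((1+x)/(1−x))`. -/
noncomputable def artanh (x : ℝ) : ℝ := Real.log ((1 + x) / (1 - x)) / 2

lemma hasDerivAt_artanh {x : ℝ} (hx : |x| < 1) :
    HasDerivAt artanh (1 / (1 - x ^ 2)) x := by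
  obtain ⟨hx₁, hx₂⟩ := abs_lt.1 hx
  have hnum : 0 < 1 + x := by linarith
  have hden : 0 < 1 - x := by linarith
  have hquot : HasDerivAt (fun y : ℝ => (1 + y) / (1 - y))
      ((1 * (1 - x) - (1 + x) * (-1)) / (1 - x) ^ 2) x :=
    ((hasDerivAt_id x).const_add 1).div ((hasDerivAt_id x).neg.const_add 1) hden.ne'
  refine ((hquot.log (div_pos hnum hden).ne').div_const 2).congr_deriv ?_
  rw [show 1 - x ^ 2 = (1 + x) * (1 - x) by ring]
  field_simp
  ring

lemma hasDerivAt_arsinh_const_mul (a x : ℝ) :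
    HasDerivAt (fun p => Real.arsinh (a * p)) (a / √(1 + (a * x) ^ 2)) x := by
  have hlin : HasDerivAt (fun p => a * p) a x := by
    simpa using (hasDerivAt_id x).const_mul a
  exact ((Real.hasDerivAt_arsinh (a * x)).comp x hlin).congr_deriv (by ring)

lemma hasDerivAt_sqrt_one_add_mul_sq {κ x : ℝ} (hβ : 0 < 1 + κ * x ^ 2) :
    HasDerivAt (fun p => √(1 + κ * p ^ 2)) (κ * x / √(1 + κ * x ^ 2)) x := by
  have hpoly : HasDerivAt (fun p : ℝ => 1 + κ * p ^ 2) (κ * (2 * x)) x := by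
    simpa using ((hasDerivAt_pow 2 x).const_mul κ).const_add 1
  refine ((Real.hasDerivAt_sqrt hβ.ne').comp x hpoly).congr_deriv ?_
  field_simp

lemma hasDerivAt_mul_div_sqrt_one_add_mul_sq (c : ℝ) {κ x : ℝ} (hβ : 0 < 1 + κ * x ^ 2) :
    HasDerivAt (fun p => p * c / √(1 + κ * p ^ 2))
      (c / ((1 + κ * x ^ 2) * √(1 + κ * x ^ 2))) x := by
  have hnum : HasDerivAt (fun p : ℝ => p * c) c x := by
    simpa using (hasDerivAt_id x).mul_const c
  have hB : 0 < √(1 + κ * x ^ 2) := Real.sqrt_pos.2 hβ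
  refine (hnum.div (hasDerivAt_sqrt_one_add_mul_sq hβ) hB.ne').congr_deriv ?_
  field_simp
  rw [Real.sq_sqrt hβ.le]
  ring

lemma one_sub_mul_sq_pos_of_abs_mul_sqrt_lt {ξ κ x : ℝ} (hξκ : 0 ≤ ξ + κ)
    (hdom : |x * √(ξ + κ)| < √(1 + κ * x ^ 2)) : 0 < 1 - ξ * x ^ 2 := by
  have hβ : 0 ≤ 1 + κ * x ^ 2 := (Real.sqrt_pos.1 ((abs_nonneg _).trans_lt hdom)).le
  have hsq := sq_lt_sq' (abs_lt.1 hdom).1 (abs_lt.1 hdom).2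
  rw [mul_pow, Real.sq_sqrt hξκ, Real.sq_sqrt hβ] at hsq
  linarith

lemma hasDerivAt_artanh_mul_sqrt_div_sqrt {ξ κ x : ℝ} (hξκ : 0 ≤ ξ + κ)
    (hdom : |x * √(ξ + κ)| < √(1 + κ * x ^ 2)) :
    HasDerivAt (fun p => artanh (p * √(ξ + κ) / √(1 + κ * p ^ 2)))
      (√(ξ + κ) / (√(1 + κ * x ^ 2) * (1 - ξ * x ^ 2))) x := by
  have hB : 0 < √(1 + κ * x ^ 2) := (abs_nonneg _).trans_lt hdom
  have hβ : 0 < 1 + κ * x ^ 2 := Real.sqrt_pos.1 hB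
  have hα := one_sub_mul_sq_pos_of_abs_mul_sqrt_lt hξκ hdom
  have hu : |x * √(ξ + κ) / √(1 + κ * x ^ 2)| < 1 := by
    rwa [abs_div, abs_of_pos hB, div_lt_one hB]
  have hu_sq : 1 - (x * √(ξ + κ) / √(1 + κ * x ^ 2)) ^ 2 =
      (1 - ξ * x ^ 2) / (1 + κ * x ^ 2) := by
    rw [div_pow, mul_pow, Real.sq_sqrt hξκ, Real.sq_sqrt hβ.le, eq_div_iff hβ.ne', sub_mul,
      div_mul_cancel₀ _ hβ.ne']
    ring
  refine ((hasDerivAt_artanh hu).comp x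
    (hasDerivAt_mul_div_sqrt_one_add_mul_sq (√(ξ + κ)) hβ)).congr_deriv ?_
  rw [hu_sq, one_div_div, div_mul_div_comm, div_eq_div_iff (by positivity) (by positivity)]
  ring

lemma hasDerivAt_einstein_frame_field_numerator {ξ κ x : ℝ} (hκ : 0 ≤ κ) (hξκ : 0 ≤ ξ + κ)
    (hdom : |x * √(ξ + κ)| < √(1 + κ * x ^ 2)) :
    HasDerivAt (fun p => -√κ * Real.arsinh (√κ * p) +
        √(ξ + κ) * artanh (p * √(ξ + κ) / √(1 + κ * p ^ 2)))
      (ξ * (√(1 + κ * x ^ 2) / (1 - ξ * x ^ 2))) x := by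
  have hB : 0 < √(1 + κ * x ^ 2) := (abs_nonneg _).trans_lt hdom
  have hβ : 0 ≤ 1 + κ * x ^ 2 := (Real.sqrt_pos.1 hB).le
  have hα := one_sub_mul_sq_pos_of_abs_mul_sqrt_lt hξκ hdom
  refine (((hasDerivAt_arsinh_const_mul √κ x).const_mul (-√κ)).add
    ((hasDerivAt_artanh_mul_sqrt_div_sqrt hξκ hdom).const_mul √(ξ + κ))).congr_deriv ?_
  rw [mul_pow, Real.sq_sqrt hκ, mul_div_assoc', mul_div_assoc', neg_mul, Real.mul_self_sqrt hκ,
    Real.mul_self_sqrt hξκ, div_add_div _ _ hB.ne' (by positivity), mul_div_assoc',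
    div_eq_div_iff (by positivity) hα.ne']
  linear_combination (-(√(1 + κ * x ^ 2) * (1 - ξ * x ^ 2) * ξ)) * Real.sq_sqrt hβ

theorem einstein_frame_field_integrated_general
    (ξ κ : ℝ) (hξ : ξ ≠ 0) (hκdef : κ = (6 * ξ - 1) * ξ) (hκ : 0 ≤ κ)
    (φ : ℝ)
    (hdom : |φ * Real.sqrt (ξ + κ)| < Real.sqrt (1 + κ * φ ^ 2)) :
    HasDerivAt (fun p : ℝ =>
        (-(Real.sqrt κ) * Real.arsinh (Real.sqrt κ * p) +
          Real.sqrt (ξ + κ) *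
            artanh (p * Real.sqrt (ξ + κ) / Real.sqrt (1 + κ * p ^ 2))) / ξ)
      (Real.sqrt (1 + κ * φ ^ 2) / (1 - ξ * φ ^ 2)) φ := by
  have hξκ : 0 ≤ ξ + κ := by
    rw [hκdef]
    nlinarith [sq_nonneg ξ]
  simpa only [mul_div_cancel_left₀ _ hξ] using (hasDerivAt_einstein_frame_field_numerator hκ hξκ hdom).div_const ξ

/-- The Einstein-frame scalar field `φ̄`, defined by `dφ̄/dφ = √β/α` with
`α = 1 − ξφ²`, `β = 1 + κφ²`, `κ = (6ξ−1)ξ`, can be integrated explicitly as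
`φ̄ = (−√κ asinh(√κ φ) + √(ξ+κ) atanh(φ√(ξ+κ)/√β))/ξ`: the derivative of this
expression with respect to `φ` equals `√β/α`. -/
theorem einstein_frame_field_integrated
    (ξ κ : ℝ) (hξ : ξ ≠ 0) (hκdef : κ = (6 * ξ - 1) * ξ) (hκ : 0 ≤ κ)
    (φ : ℝ)
    (hα : 0 < 1 - ξ * φ ^ 2) (hβ : 0 < 1 + κ * φ ^ 2)
    (hdom : |φ * Real.sqrt (ξ + κ)| < Real.sqrt (1 + κ * φ ^ 2)) :
    HasDerivAt (fun p : ℝ =>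
        (-(Real.sqrt κ) * Real.arsinh (Real.sqrt κ * p) +
          Real.sqrt (ξ + κ) *
            artanh (p * Real.sqrt (ξ + κ) / Real.sqrt (1 + κ * p ^ 2))) / ξ)
      (Real.sqrt (1 + κ * φ ^ 2) / (1 - ξ * φ ^ 2)) φ :=
  einstein_frame_field_integrated_general ξ κ hξ hκdef hκ φ hdom
end
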